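/- Let d ≥ 3, q ∈ [1,∞], G ≥ 0, μ > 0, and let f : ℝ^d → ℝ be convex and G-Lipschitz with respect to the ℓ_q-norm on ℝ^d. Define the smoothed function f^μ(y) = E_{s ~ Unif(𝔹_1^d)}[f(y + μs)], the average of f(y + μs) over s drawn from the uniform probability measure on the unit ℓ_1-ball 𝔹_1^d = {s ∈ ℝ^d : ‖s‖_1 ≤ 1} (i.e., Lebesgue measure restricted to the ball and normalized). Then f^μ is convex, and for every y ∈ ℝ^d, |f^μ(y) − f(y)| ≤ ζ_q(d)·G·μ, where ζ_q(d) = q·d^{1/q}/(d+1) if q ∈ [1, log(d)) and ζ_q(d) = e·log(d)/(d+1) if q ≥ log(d). -/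

import Mathlib

open scoped ENNReal
open MeasureTheory

/-- The ℓ_q norm on `ℝ^d`, for `q ∈ [1, ∞]` (with `‖x‖_∞ = max_i |x i|`). -/
noncomputable def lpnorm {d : ℕ} (q : ℝ≥0∞) (x : Fin d → ℝ) : ℝ :=
  if q = ∞ then ⨆ i, |x i| else (∑ i, |x i| ^ q.toReal) ^ (1 / q.toReal)

/-- The uniform probability measure on the closed unit ℓ₁-ball of `ℝ^d`
(Lebesgue measure restricted to the ball and normalized). -/
noncomputable def unifBall (d : ℕ) : Measure (Fin d → ℝ) :=
  (volume {s : Fin d → ℝ | lpnorm 1 s ≤ 1})⁻¹ •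
    volume.restrict {s : Fin d → ℝ | lpnorm 1 s ≤ 1}

/-- The constant `ζ_q(d)`: `q d^{1/q}/(d+1)` for `q ∈ [1, log d)`,
and `e log(d)/(d+1)` for `q ≥ log d` (including `q = ∞`). -/
noncomputable def zeta (d : ℕ) (q : ℝ≥0∞) : ℝ :=
  if q < ENNReal.ofReal (Real.log d) then q.toReal * (d : ℝ) ^ (1 / q.toReal) / (d + 1)
  else Real.exp 1 * Real.log d / (d + 1)

/-!
Convexity of `f^μ` is convexity of `f` averaged over translates. For the bound, the Lipschitz
condition gives `|f^μ(y) - f(y)| ≤ G μ E‖s‖_q ≤ G μ E‖s‖_r` with `r = min(q, log d)`, since the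
`ℓ_p` norms decrease in `p`. By Jensen, `E‖s‖_r ≤ (d E|s_1|^r)^(1/r)`, and slicing the `ℓ_1`-ball
along a coordinate axis turns `E|s_1|^r` into a Beta integral: `E|s_1|^r = d! / ((r+1)⋯(r+d))`.
The elementary estimate `d! (d+1)^r ≤ r^r (r+1)⋯(r+d)` for `r ≥ 1` (the log of the ratio vanishes
at `r = 1` and increases in `r`) then gives `E‖s‖_r ≤ r d^(1/r) / (d+1)`, which is `ζ_q(d)` because
`d^(1/log d) = e`.
-/

open Finset Real

section LpNorm

variable {d : ℕ}

lemma lpnorm_eq_norm_toLp {q : ℝ≥0∞} (hq : q ≠ 0) (x : Fin d → ℝ) :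
    lpnorm q x = ‖WithLp.toLp q x‖ := by
  by_cases hqt : q = ∞
  · subst hqt; rfl
  · rw [PiLp.norm_eq_sum (ENNReal.toReal_pos hq hqt), lpnorm, if_neg hqt]; rfl

lemma lpnorm_smul {q : ℝ≥0∞} (hq : 1 ≤ q) (c : ℝ) (x : Fin d → ℝ) :
    lpnorm q (c • x) = |c| * lpnorm q x := by
  have : Fact (1 ≤ q) := ⟨hq⟩
  have hq0 : q ≠ 0 := (zero_lt_one.trans_le hq).ne'
  rw [lpnorm_eq_norm_toLp hq0, lpnorm_eq_norm_toLp hq0, WithLp.toLp_smul, norm_smul,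
    Real.norm_eq_abs]

lemma abs_apply_le_lpnorm {q : ℝ≥0∞} (hq : 1 ≤ q) (x : Fin d → ℝ) (i : Fin d) :
    |x i| ≤ lpnorm q x := by
  have : Fact (1 ≤ q) := ⟨hq⟩
  rw [lpnorm_eq_norm_toLp (zero_lt_one.trans_le hq).ne']
  exact PiLp.norm_apply_le (WithLp.toLp q x) i

lemma lpnorm_nonneg {q : ℝ≥0∞} (hq : 1 ≤ q) (x : Fin d → ℝ) : 0 ≤ lpnorm q x := by
  have : Fact (1 ≤ q) := ⟨hq⟩
  rw [lpnorm_eq_norm_toLp (zero_lt_one.trans_le hq).ne']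
  exact norm_nonneg _

lemma continuous_lpnorm {q : ℝ≥0∞} (hq : 1 ≤ q) :
    Continuous (lpnorm q : (Fin d → ℝ) → ℝ) := by
  have : Fact (1 ≤ q) := ⟨hq⟩
  simp_rw [funext (lpnorm_eq_norm_toLp (d := d) (zero_lt_one.trans_le hq).ne')]
  exact continuous_norm.comp (PiLp.continuous_toLp q _)

lemma lpnorm_ofReal {r : ℝ} (hr : 0 < r) (x : Fin d → ℝ) :
    lpnorm (ENNReal.ofReal r) x = (∑ i, |x i| ^ r) ^ (1 / r) := by
  rw [lpnorm, if_neg ENNReal.ofReal_ne_top, ENNReal.toReal_ofReal hr.le]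

lemma lpnorm_le_lpnorm_of_le {p q : ℝ≥0∞} (hp : 1 ≤ p) (hpq : p ≤ q) (x : Fin d → ℝ) :
    lpnorm q x ≤ lpnorm p x := by
  set S := lpnorm p x
  have hS : 0 ≤ S := lpnorm_nonneg hp x
  by_cases hq : q = ∞
  · rw [lpnorm, if_pos hq]
    exact Real.iSup_le (abs_apply_le_lpnorm hp x) hS
  have hp' : p ≠ ∞ := ne_top_of_le_ne_top hq hpq
  set a := p.toReal
  set b := q.toReal
  have ha : 1 ≤ a := by simpa using ENNReal.toReal_mono hp' hp
  have hab : a ≤ b := ENNReal.toReal_mono hq hpq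
  have hb : 0 < b := by linarith
  have hSa : S ^ a = ∑ i, |x i| ^ a := by
    rw [show S = _ from if_neg hp', one_div, rpow_inv_rpow (by positivity) (by positivity)]
  have hsum : ∑ i, |x i| ^ b ≤ S ^ b :=
    calc ∑ i, |x i| ^ b = ∑ i, |x i| ^ a * |x i| ^ (b - a) := by
          refine sum_congr rfl fun i _ => ?_
          rw [← rpow_add' (abs_nonneg _) (by linarith), add_sub_cancel]
      _ ≤ ∑ i, |x i| ^ a * S ^ (b - a) := by
          gcongr with i
          exact abs_apply_le_lpnorm hp x i
      _ = S ^ b := by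
          rw [← sum_mul, ← hSa, ← rpow_add' hS (by linarith), add_sub_cancel]
  calc lpnorm q x = (∑ i, |x i| ^ b) ^ (1 / b) := by rw [lpnorm, if_neg hq]
    _ ≤ (S ^ b) ^ (1 / b) := by gcongr
    _ = S := by rw [one_div, rpow_rpow_inv hS hb.ne']

end LpNorm

section L1Ball

lemma lpnorm_one_eq_sum {d : ℕ} (x : Fin d → ℝ) : lpnorm 1 x = ∑ i, |x i| := by
  simp [lpnorm]

lemma volume_sum_abs_le (m : ℕ) [Nonempty (Fin m)] (c : ℝ) :
    volume {w : Fin m → ℝ | ∑ i, |w i| ≤ c} =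
      ENNReal.ofReal c ^ m * ENNReal.ofReal (2 ^ m / m.factorial) := by
  have h := volume_sum_rpow_le (ι := Fin m) le_rfl c
  simp only [rpow_one, div_one, Fintype.card_fin] at h
  rw [h, one_add_one_eq_two, Real.Gamma_two, Real.Gamma_nat_eq_factorial]
  simp

lemma volume_unit_l1Ball (d : ℕ) [NeZero d] :
    volume {s : Fin d → ℝ | lpnorm 1 s ≤ 1} = ENNReal.ofReal (2 ^ d / d.factorial) := by
  simp [lpnorm_one_eq_sum, volume_sum_abs_le]

lemma isCompact_unit_l1Ball (d : ℕ) : IsCompact {s : Fin d → ℝ | lpnorm 1 s ≤ 1} := by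
  refine (isCompact_closedBall (0 : Fin d → ℝ) 1).of_isClosed_subset ?_ fun s hs => ?_
  · simp only [lpnorm_one_eq_sum]
    exact isClosed_le (by fun_prop) continuous_const
  · rw [mem_closedBall_zero_iff, pi_norm_le_iff_of_nonneg zero_le_one]
    exact fun i => (abs_apply_le_lpnorm le_rfl s i).trans hs

instance (d : ℕ) [NeZero d] : IsProbabilityMeasure (unifBall d) := by
  constructor
  rw [unifBall, Measure.smul_apply, Measure.restrict_apply_univ, volume_unit_l1Ball, smul_eq_mul,
    ENNReal.inv_mul_cancel (by simp; positivity) ENNReal.ofReal_ne_top]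

lemma Continuous.integrable_unifBall {d : ℕ} [NeZero d] {g : (Fin d → ℝ) → ℝ}
    (hg : Continuous g) : Integrable g (unifBall d) :=
  (hg.continuousOn.integrableOn_compact (isCompact_unit_l1Ball d)).smul_measure
    (by simp [volume_unit_l1Ball]; positivity)

end L1Ball

-- Integration by parts, differentiating `(1 - t) ^ (n + 1)` and integrating `t ^ r`.
lemma integral_rpow_mul_one_sub_pow_succ (n : ℕ) {r : ℝ} (hr : 0 ≤ r) :
    (r + 1) * ∫ t in (0 : ℝ)..1, t ^ r * (1 - t) ^ (n + 1) =
      (n + 1) * ∫ t in (0 : ℝ)..1, t ^ (r + 1) * (1 - t) ^ n := by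
  have hu : ∀ t ∈ Set.uIcc (0 : ℝ) 1,
      HasDerivAt (fun t => (1 - t) ^ (n + 1)) (-((n + 1) * (1 - t) ^ n)) t := fun t _ => by
    simpa [mul_comm] using ((hasDerivAt_id t).const_sub 1).fun_pow (n + 1)
  have hv : ∀ t ∈ Set.uIcc (0 : ℝ) 1, HasDerivAt (fun t => t ^ (r + 1)) ((r + 1) * t ^ r) t :=
    fun t _ => by
      simpa using hasDerivAt_rpow_const (x := t) (p := r + 1) (Or.inr (by linarith))
  have parts := intervalIntegral.integral_mul_deriv_eq_deriv_mul hu hv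
    (Continuous.intervalIntegrable (by fun_prop) _ _)
    (Continuous.intervalIntegrable (by fun_prop (disch := positivity)) _ _)
  simp only [sub_self, zero_pow (Nat.succ_ne_zero n), zero_mul, zero_rpow
    (by linarith : r + 1 ≠ 0), mul_zero, sub_zero, zero_sub, neg_mul, intervalIntegral.integral_neg,
    neg_neg] at parts
  rw [← intervalIntegral.integral_const_mul, ← intervalIntegral.integral_const_mul]
  convert parts using 2 <;> ext t <;> ring

lemma prod_mul_integral_rpow_mul_one_sub_pow (n : ℕ) {r : ℝ} (hr : 0 ≤ r) :
    (∏ k ∈ range (n + 1), (r + 1 + k)) * ∫ t in (0 : ℝ)..1, t ^ r * (1 - t) ^ n = n.factorial := by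
  induction n generalizing r with
  | zero =>
    simp only [zero_add, range_one, prod_singleton, CharP.cast_eq_zero, add_zero, pow_zero,
      mul_one, integral_rpow (Or.inl (by linarith : (-1 : ℝ) < r)), one_rpow,
      zero_rpow (by linarith : r + 1 ≠ 0), sub_zero, Nat.factorial_zero, Nat.cast_one]
    field_simp
  | succ n ih =>
    have hprod : ∏ k ∈ range (n + 2), (r + 1 + k) =
        (r + 1) * ∏ k ∈ range (n + 1), (r + 1 + 1 + k) := by
      rw [prod_range_succ', mul_comm]
      congr 1
      · simp
      · exact prod_congr rfl fun k _ => by push_cast; ring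
    rw [hprod, mul_right_comm, integral_rpow_mul_one_sub_pow_succ n hr, mul_assoc,
      mul_comm (∫ _ in _.._, _), ih (by linarith), Nat.factorial_succ, Nat.cast_mul,
      Nat.cast_succ]

lemma log_add_nat_sub_log_le_sum_inv {x : ℝ} (hx : 0 < x) (d : ℕ) :
    log (x + d) - log x ≤ ∑ k ∈ range d, 1 / (x + k) := by
  induction d with
  | zero => simp
  | succ d ih =>
    have hxd : 0 < x + d := by positivity
    have hstep : log (x + (d + 1)) - log (x + d) ≤ 1 / (x + d) := by
      rw [← log_div (by positivity) hxd.ne']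
      refine (log_le_sub_one_of_pos (by positivity)).trans_eq ?_
      field_simp
      ring
    rw [sum_range_succ, Nat.cast_succ]
    linarith

lemma monotoneOn_mul_log_add_sum_log (d : ℕ) :
    MonotoneOn (fun x => x * log x + ∑ k ∈ range d, log (x + 1 + k) - x * log (d + 1))
      (Set.Ici 1) := by
  have hderiv : ∀ x : ℝ, 0 < x → HasDerivAt
      (fun x => x * log x + ∑ k ∈ range d, log (x + 1 + k) - x * log (d + 1))
      (log x + 1 + ∑ k ∈ range d, 1 / (x + 1 + k) - log (d + 1)) x := fun x hx => by
    refine ((hasDerivAt_mul_log hx.ne').add (HasDerivAt.fun_sum fun k _ => ?_)).sub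
      (by simpa using (hasDerivAt_id x).mul_const (log (d + 1)))
    simpa [one_div] using
      (((hasDerivAt_id x).add_const 1).add_const (k : ℝ)).log (by simp; positivity)
  refine monotoneOn_of_deriv_nonneg (convex_Ici 1)
    (fun x hx => (hderiv x (by simp at hx; linarith)).continuousAt.continuousWithinAt)
    (fun x hx => (hderiv x (by simp at hx; linarith)).differentiableAt.differentiableWithinAt)
    fun x hx => ?_
  rw [interior_Ici, Set.mem_Ioi] at hx
  have hx0 : 0 < x := by linarith
  rw [(hderiv x hx0).deriv]
  have hsum := log_add_nat_sub_log_le_sum_inv (by positivity : 0 < x + 1) d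
  simp only [add_assoc] at hsum ⊢
  have hprod : (x + 1) * (d + 1) ≤ exp 1 * (x * (x + (1 + d))) := by
    have he : 2 ≤ exp 1 := by linarith [add_one_le_exp (1 : ℝ)]
    nlinarith [mul_le_mul_of_nonneg_right he (by positivity : 0 ≤ x * (x + (1 + d)))]
  have hlog := log_le_log (by positivity) hprod
  rw [log_mul (by positivity) (by positivity), log_mul (by positivity) (by positivity),
    log_mul hx0.ne' (by positivity), log_exp] at hlog
  linarith

lemma factorial_mul_rpow_le_rpow_mul_prod (d : ℕ) {r : ℝ} (hr : 1 ≤ r) :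
    d.factorial * ((d : ℝ) + 1) ^ r ≤ r ^ r * ∏ k ∈ range d, (r + 1 + k) := by
  have hr0 : 0 < r := by linarith
  have hmono := monotoneOn_mul_log_add_sum_log d Set.self_mem_Ici (Set.mem_Ici.mpr hr) hr
  have hfact : log ((d + 1).factorial) = ∑ k ∈ range d, log (1 + 1 + k) := by
    rw [← prod_range_add_one_eq_factorial, Nat.cast_prod, log_prod fun k _ => by positivity,
      sum_range_succ']
    simp only [Nat.cast_add, Nat.cast_one, zero_add, log_one, add_zero]
    exact sum_congr rfl fun k _ => by ring_nf
  have hsucc : log ((d + 1).factorial) = log (d + 1) + log d.factorial := by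
    rw [Nat.factorial_succ, Nat.cast_mul, log_mul (by positivity) (by positivity)]
    push_cast; ring_nf
  rw [← log_le_log_iff (by positivity) (by positivity), log_mul (by positivity) (by positivity),
    log_mul (by positivity) (by positivity), log_rpow (by positivity), log_rpow hr0,
    log_prod fun k _ => by positivity]
  simp only [one_mul, log_one, mul_zero, zero_add] at hmono
  linarith

lemma setLIntegral_sum_abs_le_one_comp_apply (m : ℕ) [Nonempty (Fin m)] (i : Fin (m + 1))
    {g : ℝ → ℝ≥0∞} (hg : Measurable g) :
    ∫⁻ s in {s : Fin (m + 1) → ℝ | ∑ j, |s j| ≤ 1}, g (s i) =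
      ∫⁻ t, g t * (ENNReal.ofReal (1 - |t|) ^ m * ENNReal.ofReal (2 ^ m / m.factorial)) := by
  set e := MeasurableEquiv.piFinSuccAbove (fun _ : Fin (m + 1) => ℝ) i
  set T : Set (ℝ × (Fin m → ℝ)) := {p | |p.1| + ∑ j, |p.2 j| ≤ 1}
  have hT : MeasurableSet T := measurableSet_le (by fun_prop) measurable_const
  have hB : {s : Fin (m + 1) → ℝ | ∑ j, |s j| ≤ 1} = e ⁻¹' T := by
    ext s
    simp [T, e, Fin.sum_univ_succAbove _ i, Fin.removeNth_apply]
  have hslice : ∀ t, (fun w => T.indicator (fun p => g p.1) (t, w)) =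
      {w : Fin m → ℝ | ∑ j, |w j| ≤ 1 - |t|}.indicator (fun _ => g t) := by
    intro t
    ext w
    simp only [Set.indicator_apply, T, Set.mem_ofPred_eq, le_sub_iff_add_le']
  have hg' : Measurable fun p : ℝ × (Fin m → ℝ) => g p.1 := hg.comp measurable_fst
  calc ∫⁻ s in {s : Fin (m + 1) → ℝ | ∑ j, |s j| ≤ 1}, g (s i)
      = ∫⁻ p in T, g p.1 := by
        rw [hB]
        exact (volume_preserving_piFinSuccAbove (fun _ : Fin (m + 1) => ℝ) i
          ).setLIntegral_comp_preimage hT hg'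
    _ = ∫⁻ t, ∫⁻ w, T.indicator (fun p => g p.1) (t, w) := by
        rw [← lintegral_indicator hT, Measure.volume_eq_prod,
          lintegral_prod _ (hg'.indicator hT).aemeasurable]
    _ = _ := by
        refine lintegral_congr fun t => ?_
        rw [hslice, lintegral_indicator_const (measurableSet_le (by fun_prop) measurable_const),
          volume_sum_abs_le]

lemma lintegral_abs_rpow_mul_one_sub_abs_pow (m : ℕ) [NeZero m] {r : ℝ} (hr : 0 ≤ r) :
    ∫⁻ t : ℝ, ENNReal.ofReal (|t| ^ r) * ENNReal.ofReal (1 - |t|) ^ m =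
      ENNReal.ofReal (2 * ∫ t in (0 : ℝ)..1, t ^ r * (1 - t) ^ m) := by
  set ψ : ℝ → ℝ := fun t => t ^ r * max (1 - t) 0 ^ m
  have hψ_zero : ∀ t, 1 ≤ t → ψ t = 0 := fun t ht => by
    simp [ψ, max_eq_right (sub_nonpos.mpr ht), NeZero.ne m]
  have hψ_int : Integrable fun t => ψ |t| := by
    refine Continuous.integrable_of_hasCompactSupport (by fun_prop)
      (HasCompactSupport.intro (isCompact_Icc (a := -1) (b := 1)) fun t ht => hψ_zero _ ?_)
    rw [Set.mem_Icc, not_and_or, not_le, not_le] at ht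
    rcases ht with ht | ht
    · rw [abs_of_neg (by linarith)]; linarith
    · rw [abs_of_pos (by linarith)]; linarith
  have hψ_abs : ∀ t, ENNReal.ofReal (|t| ^ r) * ENNReal.ofReal (1 - |t|) ^ m =
      ENNReal.ofReal (ψ |t|) := fun t => by
    rw [ENNReal.ofReal_mul (by positivity), ENNReal.ofReal_pow (le_max_right _ _),
      ENNReal.ofReal_max, ENNReal.ofReal_zero, max_eq_left zero_le]
  have hIoi : ∫ t in Set.Ioi 0, ψ t = ∫ t in (0 : ℝ)..1, t ^ r * (1 - t) ^ m := by
    rw [setIntegral_eq_of_subset_of_forall_sdiff_eq_zero measurableSet_Ioi Set.Ioc_subset_Ioi_self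
      fun t ht => hψ_zero t (not_le.mp fun h => ht.2 ⟨ht.1, h⟩).le,
      intervalIntegral.integral_of_le zero_le_one]
    refine setIntegral_congr_fun measurableSet_Ioc fun t ht => ?_
    simp [ψ, max_eq_left (sub_nonneg.mpr ht.2)]
  simp_rw [hψ_abs]
  rw [← ofReal_integral_eq_lintegral_ofReal hψ_int (ae_of_all _ fun t => by positivity),
    integral_comp_abs, hIoi]

lemma integral_abs_rpow_unifBall (m : ℕ) [NeZero m] (i : Fin (m + 1)) {r : ℝ} (hr : 0 ≤ r) :
    ∫ s, |s i| ^ r ∂unifBall (m + 1) =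
      (m + 1).factorial / ∏ k ∈ range (m + 1), (r + 1 + k) := by
  set I := ∫ t in (0 : ℝ)..1, t ^ r * (1 - t) ^ m
  have hprod : 0 < ∏ k ∈ range (m + 1), (r + 1 + k) := prod_pos fun k _ => by positivity
  have hI : I = m.factorial / ∏ k ∈ range (m + 1), (r + 1 + k) := by
    rw [eq_div_iff hprod.ne', mul_comm]
    exact prod_mul_integral_rpow_mul_one_sub_pow m hr
  have hI0 : 0 ≤ I := by rw [hI]; positivity
  have hlin :
      ∫⁻ s, ENNReal.ofReal (|s i| ^ r) ∂unifBall (m + 1) = ENNReal.ofReal ((m + 1) * I) := by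
    have hg : Measurable fun t : ℝ => ENNReal.ofReal (|t| ^ r) := by fun_prop
    rw [unifBall, lintegral_smul_measure, volume_unit_l1Ball]
    simp only [lpnorm_one_eq_sum]
    rw [setLIntegral_sum_abs_le_one_comp_apply m i hg]
    simp only [← mul_assoc]
    rw [lintegral_mul_const _ (by fun_prop), lintegral_abs_rpow_mul_one_sub_abs_pow m hr,
      ← ENNReal.ofReal_inv_of_pos (by positivity), smul_eq_mul,
      ← ENNReal.ofReal_mul (mul_nonneg zero_le_two hI0), ← ENNReal.ofReal_mul (by positivity)]
    congr 1
    rw [Nat.factorial_succ]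
    push_cast
    field_simp
    ring
  rw [integral_eq_lintegral_of_nonneg_ae (ae_of_all _ fun s => by positivity)
    (Continuous.aestronglyMeasurable (by fun_prop)), hlin,
    ENNReal.toReal_ofReal (by positivity), hI, Nat.factorial_succ]
  push_cast
  ring

lemma integral_abs_rpow_unifBall_le {d : ℕ} (hd : 2 ≤ d) (i : Fin d) {r : ℝ} (hr : 1 ≤ r) :
    ∫ s, |s i| ^ r ∂unifBall d ≤ (r / (d + 1)) ^ r := by
  obtain ⟨m, rfl⟩ : ∃ m, d = m + 1 := ⟨d - 1, by omega⟩
  have : NeZero m := ⟨by omega⟩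
  have hr0 : 0 < r := by linarith
  have hineq := factorial_mul_rpow_le_rpow_mul_prod (m + 1) hr
  push_cast at hineq ⊢
  rw [integral_abs_rpow_unifBall m i hr0.le, div_rpow hr0.le (by positivity),
    div_le_div_iff₀ (prod_pos fun k _ => by positivity) (by positivity)]
  linarith

lemma integral_lpnorm_unifBall_le {d : ℕ} (hd : 2 ≤ d) {r : ℝ} (hr : 1 ≤ r) :
    ∫ s, lpnorm (ENNReal.ofReal r) s ∂unifBall d ≤ r * (d : ℝ) ^ (1 / r) / (d + 1) := by
  have : NeZero d := ⟨by omega⟩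
  have hr0 : 0 < r := by linarith
  set N := fun s : Fin d → ℝ => lpnorm (ENNReal.ofReal r) s
  have hN : N = fun s => (∑ i, |s i| ^ r) ^ (1 / r) := funext (lpnorm_ofReal hr0)
  have hN_nonneg : ∀ s, 0 ≤ N s := lpnorm_nonneg (by simpa using hr)
  have hN_cont : Continuous N := continuous_lpnorm (by simpa using hr)
  have hNr : ∀ s, N s ^ r = ∑ i, |s i| ^ r := fun s => by
    rw [hN, one_div, rpow_inv_rpow (by positivity) hr0.ne']
  have hjensen : (∫ s, N s ∂unifBall d) ^ r ≤ ∫ s, N s ^ r ∂unifBall d :=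
    (convexOn_rpow hr).map_integral_le (continuousOn_id.rpow_const fun _ _ => Or.inr hr0.le)
      isClosed_Ici (ae_of_all _ hN_nonneg) hN_cont.integrable_unifBall
      (hN_cont.rpow_const fun _ => Or.inr hr0.le).integrable_unifBall
  have hmoments : ∫ s, N s ^ r ∂unifBall d ≤ d * (r / (d + 1)) ^ r := by
    simp_rw [hNr]
    rw [integral_finsetSum _ fun i _ =>
      Continuous.integrable_unifBall (by fun_prop (disch := positivity))]
    exact (sum_le_sum fun i (_ : i ∈ univ) => integral_abs_rpow_unifBall_le hd i hr).trans_eq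
      (by simp)
  calc ∫ s, N s ∂unifBall d ≤ (d * (r / (d + 1)) ^ r) ^ r⁻¹ :=
        (le_rpow_inv_iff_of_pos (integral_nonneg hN_nonneg) (by positivity) hr0).mpr
          (hjensen.trans hmoments)
    _ = r * (d : ℝ) ^ (1 / r) / (d + 1) := by
        rw [mul_rpow (by positivity) (by positivity), rpow_rpow_inv (by positivity) hr0.ne',
          one_div]
        ring

lemma exists_zeta_eq {d : ℕ} (hd : 3 ≤ d) {q : ℝ≥0∞} (hq : 1 ≤ q) :
    ∃ r : ℝ, 1 ≤ r ∧ ENNReal.ofReal r ≤ q ∧ zeta d q = r * (d : ℝ) ^ (1 / r) / (d + 1) := by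
  have hlog : 1 ≤ log d := by
    rw [le_log_iff_exp_le (by positivity)]
    exact exp_one_lt_three.le.trans (by exact_mod_cast hd)
  by_cases hqd : q < ENNReal.ofReal (log d)
  · have hq_top : q ≠ ∞ := hqd.ne_top
    refine ⟨q.toReal, by simpa using ENNReal.toReal_mono hq_top hq, ?_, if_pos hqd⟩
    rw [ENNReal.ofReal_toReal hq_top]
  · refine ⟨log d, hlog, not_lt.mp hqd, ?_⟩
    -- `d ^ (1 / log d) = e`
    rw [zeta, if_neg hqd, rpow_def_of_pos (by positivity), mul_one_div,
      div_self (by linarith), mul_comm (log d)]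

lemma ConvexOn.integral_comp_add {E Ω : Type*} [AddCommGroup E] [Module ℝ E]
    [MeasurableSpace Ω] {ν : Measure Ω} {f : E → ℝ} (hf : ConvexOn ℝ Set.univ f) {g : Ω → E}
    (hint : ∀ y, Integrable (fun ω => f (y + g ω)) ν) :
    ConvexOn ℝ Set.univ fun y => ∫ ω, f (y + g ω) ∂ν := by
  refine ⟨convex_univ, fun x _ y _ a b ha hb hab => ?_⟩
  have hpt : ∀ ω, f (a • x + b • y + g ω) ≤ a * f (x + g ω) + b * f (y + g ω) := fun ω => by
    have hsplit : a • x + b • y + g ω = a • (x + g ω) + b • (y + g ω) := by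
      rw [smul_add, smul_add, add_add_add_comm, ← add_smul, hab, one_smul]
    rw [hsplit]
    exact hf.2 trivial trivial ha hb hab
  calc ∫ ω, f (a • x + b • y + g ω) ∂ν
      ≤ ∫ ω, (a * f (x + g ω) + b * f (y + g ω)) ∂ν :=
        integral_mono (hint _) (((hint x).const_mul a).add ((hint y).const_mul b)) hpt
    _ = a * ∫ ω, f (x + g ω) ∂ν + b * ∫ ω, f (y + g ω) ∂ν := by
        rw [integral_add ((hint x).const_mul a) ((hint y).const_mul b), integral_const_mul,
          integral_const_mul]

lemma abs_integral_sub_le_integral {Ω : Type*} [MeasurableSpace Ω] {P : Measure Ω}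
    [IsProbabilityMeasure P] {h B : Ω → ℝ} {c : ℝ} (hh : Integrable h P) (hB : Integrable B P)
    (hle : ∀ ω, |h ω - c| ≤ B ω) : |∫ ω, h ω ∂P - c| ≤ ∫ ω, B ω ∂P := by
  have hsub : ∫ ω, h ω ∂P - c = ∫ ω, (h ω - c) ∂P := by
    rw [integral_sub hh (integrable_const c), integral_const, probReal_univ, one_smul]
  rw [hsub]
  exact abs_integral_le_integral_abs.trans
    (integral_mono (hh.sub (integrable_const c)).abs hB hle)

theorem stmt_16 (d : ℕ) (hd : 3 ≤ d) (q : ℝ≥0∞) (hq : 1 ≤ q)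
    (G μ : ℝ) (hG : 0 ≤ G) (hμ : 0 < μ)
    (f : (Fin d → ℝ) → ℝ) (hconv : ConvexOn ℝ Set.univ f)
    (hlip : ∀ x z : Fin d → ℝ, |f x - f z| ≤ G * lpnorm q (x - z)) :
    ConvexOn ℝ Set.univ (fun y : Fin d → ℝ => ∫ s, f (y + μ • s) ∂(unifBall d)) ∧
    ∀ y : Fin d → ℝ,
      |(∫ s, f (y + μ • s) ∂(unifBall d)) - f y| ≤ zeta d q * G * μ := by
  have : NeZero d := ⟨by omega⟩
  have hf : Continuous f := continuousOn_univ.mp (hconv.continuousOn isOpen_univ)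
  have hint : ∀ y, Integrable (fun s => f (y + μ • s)) (unifBall d) := fun y =>
    Continuous.integrable_unifBall (by fun_prop)
  refine ⟨hconv.integral_comp_add hint, fun y => ?_⟩
  obtain ⟨r, hr, hrq, hzeta⟩ := exists_zeta_eq hd hq
  have hr' : 1 ≤ ENNReal.ofReal r := by simpa using hr
  have hpt : ∀ s, |f (y + μ • s) - f y| ≤ G * μ * lpnorm (ENNReal.ofReal r) s := fun s =>
    calc |f (y + μ • s) - f y| ≤ G * lpnorm q (μ • s) := by simpa using hlip (y + μ • s) y
      _ ≤ G * lpnorm (ENNReal.ofReal r) (μ • s) := by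
          gcongr
          exact lpnorm_le_lpnorm_of_le hr' hrq _
      _ = G * μ * lpnorm (ENNReal.ofReal r) s := by
          rw [lpnorm_smul hr', abs_of_pos hμ, mul_assoc]
  calc |(∫ s, f (y + μ • s) ∂unifBall d) - f y|
      ≤ ∫ s, G * μ * lpnorm (ENNReal.ofReal r) s ∂unifBall d :=
        abs_integral_sub_le_integral (hint y)
          ((continuous_lpnorm hr').integrable_unifBall.const_mul _) hpt
    _ = G * μ * ∫ s, lpnorm (ENNReal.ofReal r) s ∂unifBall d := integral_const_mul _ _
    _ ≤ G * μ * (r * (d : ℝ) ^ (1 / r) / (d + 1)) := by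
        gcongr
        exact integral_lpnorm_unifBall_le (by omega) hr
    _ = zeta d q * G * μ := by rw [hzeta]; ring
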